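/- arXiv:1608.01545 — 3 statements merged into one kernel-verified Lean document; each statement's English description precedes it below -/
import Mathlib

section
/- Let p be a prime and k > j ≥ 1 integers. All elements of the set {C(k-j, 1), C(k-j+1, 2), ..., C(k-j+t-1, t), ..., C(k-1, j)} of binomial coefficients are divisible by p if and only if j < p^{a(k-j)}, where p^{a(k-j)} is the exact power of p dividing k-j. -/
/-!
Write `n = k - j` and `v = a(n)`. The identity `t * C(n - 1 + t, t) = n * C(n - 1 + t, t - 1)`
shows that `p ∤ C(n - 1 + t, t)` forces `p ^ v ∣ t`, so no such `t` lies in `[1, p ^ v)`.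
Conversely, by Lucas' theorem `C(a, p ^ v) ≡ ⌊a / p ^ v⌋ (mod p)`, so `C(n - 1 + p ^ v, p ^ v)`
is congruent to `n / p ^ v`, which is prime to `p`.
-/

open Nat

lemma Nat.succ_mul_choose_add_succ (m t : ℕ) :
    (t + 1) * (m + t + 1).choose (t + 1) = (m + 1) * (m + t + 1).choose t := by
  have h := Nat.choose_succ_right_eq (m + t + 1) t
  rw [show m + t + 1 - t = m + 1 by omega] at h
  rw [mul_comm, h, mul_comm]

lemma Nat.Prime.pow_dvd_of_not_dvd_choose_add {p v m t : ℕ} (hp : p.Prime)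
    (hm : p ^ v ∣ m + 1) (h : ¬ p ∣ (m + t).choose t) : p ^ v ∣ t := by
  cases t with
  | zero => exact dvd_zero _
  | succ t =>
    have hcop : Coprime (p ^ v) ((m + (t + 1)).choose (t + 1)) :=
      ((hp.coprime_iff_not_dvd).2 h).pow_left v
    refine hcop.dvd_of_dvd_mul_right ?_
    rw [← add_assoc, Nat.succ_mul_choose_add_succ]
    exact hm.mul_right _

lemma Nat.choose_prime_pow_modEq_div {p : ℕ} [Fact p.Prime] (a v : ℕ) :
    a.choose (p ^ v) ≡ a / p ^ v [MOD p] := by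
  induction v generalizing a with
  | zero => simp [Nat.ModEq.refl]
  | succ v ih =>
    have hp := (Fact.out : p.Prime).pos
    calc a.choose (p ^ (v + 1))
        ≡ (a % p).choose (p ^ (v + 1) % p) * (a / p).choose (p ^ (v + 1) / p) [MOD p] :=
          Choose.choose_modEq_choose_mod_mul_choose_div_nat
      _ = (a / p).choose (p ^ v) := by
          rw [pow_succ, Nat.mul_mod_left, Nat.mul_div_cancel _ hp, choose_zero_right, one_mul]
      _ ≡ a / p / p ^ v [MOD p] := ih _
      _ = a / p ^ (v + 1) := by rw [Nat.div_div_eq_div_mul, pow_succ, mul_comm]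

lemma Nat.Prime.not_dvd_choose_sub_one_add_pow_padicValNat {p n : ℕ} (hp : p.Prime)
    (hn : n ≠ 0) :
    ¬ p ∣ (n - 1 + p ^ padicValNat p n).choose (p ^ padicValNat p n) := by
  have := Fact.mk hp
  set q := p ^ padicValNat p n
  have hqn : q ∣ n := pow_padicValNat_dvd
  have hq : 0 < q := pow_pos hp.pos _
  have hdiv : (n - 1 + q) / q = n / q := by
    have := Nat.le_of_dvd (Nat.pos_of_ne_zero hn) hqn
    rw [show n - 1 + q = q - 1 + n by omega, Nat.add_div_of_dvd_left hqn,
      Nat.div_eq_of_lt (by omega), zero_add]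
  rw [(Nat.choose_prime_pow_modEq_div _ _).dvd_iff dvd_rfl, hdiv]
  exact fun h => pow_succ_padicValNat_not_dvd hn (pow_succ p _ ▸ Nat.mul_dvd_of_dvd_div hqn h)

theorem stmt_0_general (p k j : ℕ) (hp : p.Prime) (hk : j < k) :
    (∀ t, 1 ≤ t → t ≤ j → p ∣ Nat.choose (k - j + t - 1) t) ↔
      j < p ^ (padicValNat p (k - j)) := by
  have hn : k - j ≠ 0 := by omega
  have hpow : p ^ padicValNat p (k - j) ∣ k - j - 1 + 1 := by
    rw [Nat.sub_add_cancel (by omega)]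
    exact pow_padicValNat_dvd
  constructor
  · intro hdvd
    by_contra! hle
    refine hp.not_dvd_choose_sub_one_add_pow_padicValNat hn ?_
    have := hdvd _ (Nat.one_le_pow _ _ hp.pos) hle
    rwa [Nat.sub_add_comm (by omega)] at this
  · intro hlt t ht htj
    by_contra hndvd
    rw [show k - j + t - 1 = k - j - 1 + t by omega] at hndvd
    have := Nat.le_of_dvd ht (hp.pow_dvd_of_not_dvd_choose_add hpow hndvd)
    omega

theorem stmt_0 (p k j : ℕ) (hp : p.Prime) (hj : 1 ≤ j) (hk : j < k) :
    (∀ t, 1 ≤ t → t ≤ j → p ∣ Nat.choose (k - j + t - 1) t) ↔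
      j < p ^ (padicValNat p (k - j)) :=
  stmt_0_general p k j hp hk
end

section
/- Let p be a prime and k > j ≥ 1 with 1 ≤ t < p^{a(k-j)}, where a(k-j) is the p-adic valuation of k-j. Then the binomial coefficient C(k-j+t-1, t) is divisible by p. -/
theorem stmt_2 (p k j t : ℕ) (hp : p.Prime) (hj : 1 ≤ j) (hk : j < k)
    (ht1 : 1 ≤ t) (ht2 : t < p ^ (padicValNat p (k - j))) :
    p ∣ Nat.choose (k - j + t - 1) t := by
  haveI : Fact p.Prime := ⟨hp⟩
  set m := k - j with hm
  have hm1 : 1 ≤ m := by omega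
  set a := padicValNat p m with ha
  have key : Nat.choose (m + t - 1) t * t = Nat.choose (m + t - 1) (t - 1) * m := by
    have := Nat.choose_succ_right_eq (m + t - 1) (t - 1)
    have h1 : t - 1 + 1 = t := by omega
    have h2 : m + t - 1 - (t - 1) = m := by omega
    rwa [h1, h2] at this
  have hC : 0 < Nat.choose (m + t - 1) t := Nat.choose_pos (by omega)
  have hC' : 0 < Nat.choose (m + t - 1) (t - 1) := Nat.choose_pos (by omega)
  have hval := congrArg (padicValNat p) key
  rw [padicValNat.mul hC.ne' (by omega), padicValNat.mul hC'.ne' (by omega)] at hval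
  -- v_p(t) < a
  have hvt : padicValNat p t < a := by
    have hle : p ^ padicValNat p t ≤ t := Nat.le_of_dvd (by omega) pow_padicValNat_dvd
    by_contra h
    push_neg at h
    have : p ^ a ≤ p ^ padicValNat p t := Nat.pow_le_pow_right hp.pos h
    omega
  have hpos : 0 < padicValNat p (Nat.choose (m + t - 1) t) := by omega
  exact dvd_trans (dvd_pow_self p hpos.ne') pow_padicValNat_dvd
end

section
/- Let p be a prime and r ≥ 1. Then there is no s with 0 ≤ s < p^r - 1 such that for all t with 0 < t < p^r - s the binomial coefficient C(s+t, t) is divisible by p. -/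
open Finset in
lemma not_dvd_choose_pow_sub_one {p r : ℕ} (hp : p.Prime) (hr : 1 ≤ r) {t : ℕ}
    (ht : t ≤ p ^ r - 1) : ¬ p ∣ Nat.choose (p ^ r - 1) t := by
  have hp2 : 2 ≤ p := hp.two_le
  have hpr : 2 ≤ p ^ r := le_trans hp2 (Nat.le_self_pow (by omega) p)
  have hn0 : p ^ r - 1 ≠ 0 := by omega
  have hlog : Nat.log p (p ^ r - 1) < r + 1 := by
    have := Nat.log_lt_of_lt_pow hn0 (show p ^ r - 1 < p ^ r by omega)
    omega
  rw [← emultiplicity_eq_zero]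
  rw [hp.emultiplicity_choose ht hlog]
  norm_cast
  rw [Finset.card_eq_zero, Finset.filter_eq_empty_iff]
  intro i hi
  rw [Finset.mem_Ico] at hi
  push_neg
  by_cases hir : i ≤ r
  · -- (p^r - 1) % p^i = p^i - 1
    obtain ⟨c, hc⟩ := pow_dvd_pow p hir
    have hpi : 2 ≤ p ^ i := le_trans hp2 (Nat.le_self_pow (by omega) p)
    have hc1 : 1 ≤ c := by
      rcases Nat.eq_zero_or_pos c with rfl | h
      · simp at hc; omega
      · exact h
    have hmod : (p ^ r - 1) % p ^ i = p ^ i - 1 := by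
      have key : p ^ r - 1 = p ^ i * (c - 1) + (p ^ i - 1) := by
        have h4 : p ^ i * (c - 1 + 1) = p ^ i * (c - 1) + p ^ i := Nat.mul_succ _ _
        have h5 : c - 1 + 1 = c := by omega
        rw [h5] at h4
        omega
      rw [key, Nat.mul_add_mod]
      exact Nat.mod_eq_of_lt (by omega)
    have ha : t % p ^ i < p ^ i := Nat.mod_lt _ (by omega)
    have hb : (p ^ r - 1 - t) % p ^ i < p ^ i := Nat.mod_lt _ (by omega)
    by_contra hle
    push_neg at hle
    have hsum : (t % p ^ i + (p ^ r - 1 - t) % p ^ i) % p ^ i = p ^ i - 1 := by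
      rw [← Nat.add_mod, show t + (p ^ r - 1 - t) = p ^ r - 1 by omega, hmod]
    have h5 : (t % p ^ i + (p ^ r - 1 - t) % p ^ i) % p ^ i
        = t % p ^ i + (p ^ r - 1 - t) % p ^ i - p ^ i := by
      rw [Nat.mod_eq_sub_mod hle, Nat.mod_eq_of_lt (by omega)]
    omega
  · have : p ^ r - 1 < p ^ i := by
      calc p ^ r - 1 < p ^ r := by omega
        _ ≤ p ^ i := Nat.pow_le_pow_right (by omega) (by omega)
    have ha : t % p ^ i ≤ t := Nat.mod_le _ _
    have hb : (p ^ r - 1 - t) % p ^ i ≤ p ^ r - 1 - t := Nat.mod_le _ _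
    omega

theorem stmt_9 (p r : ℕ) (hp : p.Prime) (hr : 1 ≤ r) :
    ¬ ∃ s : ℕ, s < p ^ r - 1 ∧
      ∀ t : ℕ, 0 < t → t < p ^ r - s → p ∣ Nat.choose (s + t) t := by
  rintro ⟨s, hs, h⟩
  have hp2 : p.Prime := hp
  have hpr : 2 ≤ p ^ r := le_trans hp.two_le (Nat.le_self_pow (by omega) p)
  set t := p ^ r - 1 - s with ht
  have h1 : 0 < t := by omega
  have h2 : t < p ^ r - s := by omega
  have h3 : s + t = p ^ r - 1 := by omega
  have := h t h1 h2
  rw [h3] at this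
  exact not_dvd_choose_pow_sub_one hp hr (by omega) this
end
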